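/- arXiv:1204.6272 — 3 statements merged into one kernel-verified Lean document; each statement's English description precedes it below -/
import Mathlib

section
/- Let M be a space-like slant submanifold of a Lorentzian almost contact manifold with slant angle θ ≠ π/2. Then, at every point, the endomorphism Q = T² admits -cos²θ as its only non-vanishing eigenvalue, and the corresponding eigenspace H is contained in D = span(ξ)^⊥. -/
open scoped RealInnerProductSpace

/-- For a space-like slant submanifold with slant angle `θ ≠ π/2` of a
Lorentzian almost contact manifold (pointwise linear-algebra model: `T` is the
skew-adjoint tangential part of `φ`, `Tξ = 0`, and `‖TX‖ = cos θ ‖X‖` for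
`X ⊥ ξ`), the endomorphism `Q = T²` admits `-cos²θ` as its only non-vanishing
eigenvalue, and any eigenvector with non-vanishing eigenvalue lies in
`D = span(ξ)ᗮ`. -/
theorem slant_Q_eigenvalue
    {W : Type*} [NormedAddCommGroup W] [InnerProductSpace ℝ W]
    (T : W →ₗ[ℝ] W) (ξ : W) (θ : ℝ)
    (hθ : θ ∈ Set.Icc 0 (Real.pi / 2)) (hθ' : θ ≠ Real.pi / 2)
    (hskew : ∀ X Y, ⟪T X, Y⟫ = -⟪X, T Y⟫)
    (hTξ : T ξ = 0)
    (hξ : ‖ξ‖ = 1)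
    (hslant : ∀ X, ⟪X, ξ⟫ = 0 → ‖T X‖ = Real.cos θ * ‖X‖) :
    ∀ (μ : ℝ) (X : W), X ≠ 0 → T (T X) = μ • X → μ ≠ 0 →
      μ = -(Real.cos θ) ^ 2 ∧ ⟪X, ξ⟫ = 0 := by
  intro μ X hX heig hμ
  -- ⟪T²X, ξ⟫ = -⟪TX, Tξ⟫ = 0
  have h1 : ⟪T (T X), ξ⟫ = 0 := by
    rw [hskew, hTξ, inner_zero_right]; ring
  have hXξ : ⟪X, ξ⟫ = 0 := by
    rw [heig, real_inner_smul_left] at h1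
    exact (mul_eq_zero.mp h1).resolve_left hμ
  refine ⟨?_, hXξ⟩
  -- ‖TX‖² = -⟪X, T²X⟫ = -μ‖X‖²
  have h2 : ‖T X‖ ^ 2 = -μ * ‖X‖ ^ 2 := by
    have := hskew (T X) X
    rw [heig, real_inner_smul_left, real_inner_self_eq_norm_sq] at this
    rw [← real_inner_self_eq_norm_sq]; linarith
  have h3 : ‖T X‖ = Real.cos θ * ‖X‖ := hslant X hXξ
  have hX2 : ‖X‖ ^ 2 ≠ 0 := pow_ne_zero 2 (norm_ne_zero_iff.mpr hX)
  have : (Real.cos θ) ^ 2 * ‖X‖ ^ 2 = -μ * ‖X‖ ^ 2 := by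
    rw [← h2, h3]; ring
  have := mul_right_cancel₀ hX2 this
  linarith
end

section
/- Let M be a space-like submanifold of a Lorentzian almost contact manifold with ξ tangent to M. Then M is slant if and only if there exists a constant λ ∈ [0,1] such that T² = λ(-I + η ⊗ ξ); moreover, if θ is the slant angle then λ = cos²θ. -/
open scoped RealInnerProductSpace


private lemma aux_Tsq
    {W : Type*} [NormedAddCommGroup W] [InnerProductSpace ℝ W]
    (T : W →ₗ[ℝ] W) (ξ : W)
    (hskew : ∀ X Y, ⟪T X, Y⟫ = -⟪X, T Y⟫)
    (hTξ : T ξ = 0)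
    (hξ : ‖ξ‖ = 1)
    (c : ℝ) (hc : 0 ≤ c)
    (h : ∀ X, ⟪X, ξ⟫ = 0 → ‖T X‖ = c * ‖X‖) :
    ∀ X, T (T X) = c ^ 2 • (-X + ⟪X, ξ⟫ • ξ) := by
  -- inner products
  have hsq : ∀ X, ⟪X, ξ⟫ = 0 → ⟪T X, T X⟫ = c ^ 2 * ⟪X, X⟫ := by
    intro X hX
    rw [real_inner_self_eq_norm_sq, real_inner_self_eq_norm_sq, h X hX]
    ring
  have hpol : ∀ X Y, ⟪X, ξ⟫ = 0 → ⟪Y, ξ⟫ = 0 → ⟪T X, T Y⟫ = c ^ 2 * ⟪X, Y⟫ := by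
    intro X Y hX hY
    have hXY : ⟪X + Y, ξ⟫ = 0 := by rw [inner_add_left, hX, hY]; ring
    have := hsq (X + Y) hXY
    rw [map_add, inner_add_add_self, inner_add_add_self, hsq X hX, hsq Y hY] at this
    have h1 : ⟪T Y, T X⟫ = ⟪T X, T Y⟫ := real_inner_comm _ _
    have h2 : ⟪Y, X⟫ = ⟪X, Y⟫ := real_inner_comm _ _
    rw [h1, h2] at this
    linarith
  -- T² ξ = 0 and ⟪T²X, ξ⟫ = 0
  have hTXξ : ∀ X, ⟪T X, ξ⟫ = 0 := by
    intro X
    rw [hskew]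
    rw [hTξ, inner_zero_right]; ring
  have hξξ : ⟪ξ, ξ⟫ = (1:ℝ) := by
    rw [real_inner_self_eq_norm_sq, hξ]; norm_num
  -- first for X ⊥ ξ
  have key : ∀ X, ⟪X, ξ⟫ = 0 → T (T X) = -(c ^ 2) • X := by
    intro X hX
    have hZ : ∀ Y, ⟪T (T X) + (c ^ 2) • X, Y⟫ = 0 := by
      intro Y
      have hY0 : ⟪Y - ⟪Y, ξ⟫ • ξ, ξ⟫ = 0 := by
        rw [inner_sub_left, inner_smul_left, hξξ]; simp
      have h1 : ⟪T (T X), Y - ⟪Y, ξ⟫ • ξ⟫ = -(c ^ 2 * ⟪X, Y - ⟪Y, ξ⟫ • ξ⟫) := by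
        rw [hskew, real_inner_comm, hpol _ _ hY0 hX, real_inner_comm]
      have h2 : ⟪T (T X), ξ⟫ = 0 := hTXξ _
      have hXY0 : ⟪X, Y - ⟪Y, ξ⟫ • ξ⟫ = ⟪X, Y⟫ := by
        rw [inner_sub_right, inner_smul_right, hX]; ring
      have hTY : ⟪T (T X), Y⟫ = ⟪T (T X), Y - ⟪Y, ξ⟫ • ξ⟫ + ⟪Y, ξ⟫ * ⟪T (T X), ξ⟫ := by
        rw [inner_sub_right, inner_smul_right]; ring
      rw [inner_add_left, hTY, h1, h2, hXY0, inner_smul_left]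
      simp only [RCLike.star_def, conj_trivial]
      ring
    have := hZ (T (T X) + (c ^ 2) • X)
    rw [inner_self_eq_zero] at this
    have : T (T X) = -((c ^ 2) • X) := by
      rw [eq_neg_iff_add_eq_zero]; exact this
    rw [this, neg_smul]
  intro X
  have hX0 : ⟪X - ⟪X, ξ⟫ • ξ, ξ⟫ = 0 := by
    rw [inner_sub_left, inner_smul_left, hξξ]; simp
  have := key (X - ⟪X, ξ⟫ • ξ) hX0
  rw [map_sub, map_smul, hTξ, smul_zero, sub_zero] at this
  rw [this]
  module

/-- A space-like submanifold (pointwise model: `T` skew-adjoint tangential part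
of `φ` with `Tξ = 0`, `η = ⟨·, ξ⟩`, `‖ξ‖ = 1`) is slant if and only if there
is a constant `λ ∈ [0,1]` with `T² = λ(-I + η ⊗ ξ)`; moreover if `θ` is the
slant angle then `λ = cos²θ`. -/
theorem slant_iff_Tsq_eq
    {W : Type*} [NormedAddCommGroup W] [InnerProductSpace ℝ W]
    (T : W →ₗ[ℝ] W) (ξ : W)
    (hskew : ∀ X Y, ⟪T X, Y⟫ = -⟪X, T Y⟫)
    (hTξ : T ξ = 0)
    (hξ : ‖ξ‖ = 1) :
    ((∃ θ ∈ Set.Icc 0 (Real.pi / 2),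
        ∀ X, ⟪X, ξ⟫ = 0 → ‖T X‖ = Real.cos θ * ‖X‖) ↔
      (∃ lam ∈ Set.Icc (0 : ℝ) 1,
        ∀ X, T (T X) = lam • (-X + ⟪X, ξ⟫ • ξ))) ∧
    (∀ θ ∈ Set.Icc 0 (Real.pi / 2),
      (∀ X, ⟪X, ξ⟫ = 0 → ‖T X‖ = Real.cos θ * ‖X‖) →
      ∀ X, T (T X) = Real.cos θ ^ 2 • (-X + ⟪X, ξ⟫ • ξ)) := by
  have pi_pos := Real.pi_pos
  have moreover : ∀ θ ∈ Set.Icc 0 (Real.pi / 2),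
      (∀ X, ⟪X, ξ⟫ = 0 → ‖T X‖ = Real.cos θ * ‖X‖) →
      ∀ X, T (T X) = Real.cos θ ^ 2 • (-X + ⟪X, ξ⟫ • ξ) := by
    intro θ hθ hs
    have hcos : 0 ≤ Real.cos θ :=
      Real.cos_nonneg_of_mem_Icc ⟨by linarith [hθ.1], hθ.2⟩
    exact aux_Tsq T ξ hskew hTξ hξ _ hcos hs
  refine ⟨⟨?_, ?_⟩, moreover⟩
  · rintro ⟨θ, hθ, hs⟩
    have hcos : 0 ≤ Real.cos θ :=
      Real.cos_nonneg_of_mem_Icc ⟨by linarith [hθ.1], hθ.2⟩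
    have hcos1 : Real.cos θ ≤ 1 := Real.cos_le_one θ
    exact ⟨Real.cos θ ^ 2, ⟨by positivity, by nlinarith⟩, moreover θ hθ hs⟩
  · rintro ⟨lam, ⟨hl0, hl1⟩, hT2⟩
    have hsl : Real.sqrt lam ≤ 1 := Real.sqrt_le_one.2 hl1
    refine ⟨Real.arccos (Real.sqrt lam),
      ⟨Real.arccos_nonneg _, Real.arccos_le_pi_div_two.2 (Real.sqrt_nonneg _)⟩, ?_⟩
    intro X hX
    have hcos : Real.cos (Real.arccos (Real.sqrt lam)) = Real.sqrt lam :=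
      Real.cos_arccos (by linarith [Real.sqrt_nonneg lam]) hsl
    rw [hcos]
    have h1 : ⟪T X, T X⟫ = lam * ⟪X, X⟫ := by
      have h2 := hskew (T X) X
      rw [hT2 X, hX, zero_smul, add_zero, smul_neg, inner_neg_left,
        inner_smul_left] at h2
      simp only [RCLike.star_def, conj_trivial] at h2
      linarith
    have h3 : ‖T X‖ ^ 2 = lam * ‖X‖ ^ 2 := by
      rw [← real_inner_self_eq_norm_sq, ← real_inner_self_eq_norm_sq]; exact h1
    have h4 : ‖T X‖ = Real.sqrt (lam * ‖X‖ ^ 2) := by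
      rw [← h3, Real.sqrt_sq (norm_nonneg _)]
    rw [h4, Real.sqrt_mul hl0, Real.sqrt_sq (norm_nonneg _)]
end

section
/- Let M be a submanifold of a Lorentzian Sasakian manifold with ξ tangent to M, θ ∈ (0, π/2). Suppose for every point x and every unit X ∈ T_xM orthogonal to ξ, R(X, ξ, X, ξ) = cos²θ. Then Q = T² acts as multiplication by -cos²θ on span(ξ)^⊥ and Qξ = 0; hence Q = cos²θ(-I + η⊗ξ) and M is slant with slant angle θ. -/
open scoped RealInnerProductSpace

/-- Converse: let `M` be a submanifold of a Lorentzian Sasakian manifold with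
`ξ` tangent, `θ ∈ (0, π/2)`, `T` the skew-adjoint tangential part of `φ` with
`Tξ = 0`, and suppose the curvature identity `R(X, ξ, X, ξ) = -⟨QX, X⟩` holds
for `X ⊥ ξ`. If `R(X, ξ, X, ξ) = cos²θ` for every unit `X ⊥ ξ`, then
`Q = T² = cos²θ(-I + η⊗ξ)` and `M` is slant with slant angle `θ`. -/
theorem sectional_curvature_implies_slant
    {W : Type*} [NormedAddCommGroup W] [InnerProductSpace ℝ W]
    (T : W →ₗ[ℝ] W) (ξ : W) (θ : ℝ) (R4 : W → ℝ)
    (hθ : θ ∈ Set.Ioo 0 (Real.pi / 2))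
    (hskew : ∀ X Y, ⟪T X, Y⟫ = -⟪X, T Y⟫)
    (hTξ : T ξ = 0)
    (hξ : ‖ξ‖ = 1)
    -- the curvature identity R(X, ξ, X, ξ) = -⟨QX, X⟩ for X ⊥ ξ
    (hRid : ∀ X, ⟪X, ξ⟫ = 0 → R4 X = -⟪T (T X), X⟫)
    -- hypothesis: sectional curvature of every plane containing ξ is cos²θ
    (hcurv : ∀ X, ⟪X, ξ⟫ = 0 → ‖X‖ = 1 → R4 X = Real.cos θ ^ 2) :
    (∀ X, T (T X) = Real.cos θ ^ 2 • (-X + ⟪X, ξ⟫ • ξ)) ∧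
    (∀ X, ⟪X, ξ⟫ = 0 → ‖T X‖ = Real.cos θ * ‖X‖) := by
  have hc0 : 0 ≤ Real.cos θ := le_of_lt <| Real.cos_pos_of_mem_Ioo
    ⟨by linarith [hθ.1, Real.pi_pos], hθ.2⟩
  set c : ℝ := Real.cos θ ^ 2 with hc
  -- self-adjointness of T²
  have hsa : ∀ X Y : W, ⟪T (T X), Y⟫ = ⟪X, T (T Y)⟫ := by
    intro X Y
    rw [hskew, hskew]; ring
  -- quadratic form on ξ-perp
  have hquad : ∀ Y : W, ⟪Y, ξ⟫ = 0 → ⟪T (T Y), Y⟫ = -(c * ‖Y‖ ^ 2) := by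
    intro Y hY
    rcases eq_or_ne Y 0 with rfl | hY0
    · simp
    · have hn : ‖Y‖ ≠ 0 := norm_ne_zero_iff.mpr hY0
      have h1 : ⟪(‖Y‖⁻¹ : ℝ) • Y, ξ⟫ = 0 := by
        rw [real_inner_smul_left, hY, mul_zero]
      have h2 : ‖(‖Y‖⁻¹ : ℝ) • Y‖ = 1 := by
        rw [norm_smul, norm_inv, norm_norm, inv_mul_cancel₀ hn]
      have key := (hRid _ h1).symm.trans (hcurv _ h1 h2)
      rw [map_smul, map_smul, real_inner_smul_left, real_inner_smul_right] at key
      have hn2 : (0:ℝ) < ‖Y‖ ^ 2 := by positivity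
      field_simp at key
      nlinarith [key]
  -- polarized form
  have hpol : ∀ Y Z : W, ⟪Y, ξ⟫ = 0 → ⟪Z, ξ⟫ = 0 →
      ⟪T (T Y), Z⟫ = -(c * ⟪Y, Z⟫) := by
    intro Y Z hY hZ
    have hYZ : ⟪Y + Z, ξ⟫ = 0 := by rw [inner_add_left, hY, hZ, add_zero]
    have h1 := hquad _ hYZ
    have h2 := hquad _ hY
    have h3 := hquad _ hZ
    have hexp : ⟪T (T (Y + Z)), Y + Z⟫
        = ⟪T (T Y), Y⟫ + 2 * ⟪T (T Y), Z⟫ + ⟪T (T Z), Z⟫ := by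
      rw [map_add, map_add, inner_add_left, inner_add_right, inner_add_right]
      have : ⟪T (T Z), Y⟫ = ⟪T (T Y), Z⟫ := by
        rw [hsa, real_inner_comm]
      rw [this]; ring
    have hnorm : ‖Y + Z‖ ^ 2 = ‖Y‖ ^ 2 + 2 * ⟪Y, Z⟫ + ‖Z‖ ^ 2 :=
      norm_add_sq_real Y Z
    rw [hexp, hnorm] at h1
    linarith
  -- T² of perp vectors
  have hperp2 : ∀ Y : W, ⟪T (T Y), ξ⟫ = 0 := by
    intro Y
    rw [hsa, hTξ, map_zero, inner_zero_right]
  have hmain : ∀ Y : W, ⟪Y, ξ⟫ = 0 → T (T Y) = -(c • Y) := by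
    intro Y hY
    have hv : T (T Y) + c • Y = 0 := by
      rw [← inner_self_eq_zero (𝕜 := ℝ)]
      have e1 : ⟪T (T Y), T (T Y)⟫ = -(c * ⟪Y, T (T Y)⟫) :=
        hpol Y (T (T Y)) hY (hperp2 Y)
      have e2 : ⟪T (T Y), Y⟫ = -(c * ⟪Y, Y⟫) := hpol Y Y hY hY
      have e3 : ⟪Y, T (T Y)⟫ = ⟪T (T Y), Y⟫ := real_inner_comm _ _
      rw [inner_add_add_self, real_inner_smul_left, real_inner_smul_right,
        real_inner_smul_left]
      rw [e1, e3, e2, real_inner_smul_right]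
      ring
    exact eq_neg_of_add_eq_zero_left hv
  constructor
  · intro X
    have hYperp : ⟪X - ⟪X, ξ⟫ • ξ, ξ⟫ = 0 := by
      rw [inner_sub_left, real_inner_smul_left, real_inner_self_eq_norm_sq, hξ]
      ring
    have h := hmain _ hYperp
    have hTX : T (T X) = T (T (X - ⟪X, ξ⟫ • ξ)) := by
      rw [map_sub, map_smul, hTξ, smul_zero, sub_zero]
    rw [hTX, h, hc]
    module
  · intro X hX
    have h := hmain X hX
    have hTX2 : ⟪T X, T X⟫ = c * ‖X‖ ^ 2 := by
      have hsk := hskew X (T X)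
      rw [h, inner_neg_right, real_inner_smul_right,
        real_inner_self_eq_norm_sq] at hsk
      rw [real_inner_self_eq_norm_sq] at hsk ⊢
      linarith
    have : ‖T X‖ ^ 2 = (Real.cos θ * ‖X‖) ^ 2 := by
      rw [← real_inner_self_eq_norm_sq, hTX2, hc]; ring
    have h1 : 0 ≤ Real.cos θ * ‖X‖ := by positivity
    nlinarith [norm_nonneg (T X), norm_nonneg X]
end
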